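/- Let D be a real symmetric positive semidefinite d×d matrix (d ≥ 2) with eigenvalues δ₁↓ ≥ δ₂↓ ≥ … in decreasing order. Then for any two orthonormal vectors v₁, v₂ in ℝ^d, ⟨v₁, D v₁⟩ · ⟨v₂, D v₂⟩ ≤ ((δ₁↓ + δ₂↓)/2)². -/

import Mathlib

/-!
Expand `D` in an orthonormal eigenbasis `(uⱼ)` with eigenvalues `λⱼ`: then
`⟨v₁, Dv₁⟩ + ⟨v₂, Dv₂⟩ = ∑ⱼ λⱼ wⱼ` with `wⱼ = ⟨uⱼ, v₁⟩² + ⟨uⱼ, v₂⟩²`. By Parseval the weights sum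
to `2`, and by Bessel's inequality for the orthonormal pair `v₁, v₂` each weight is at most `1`,
so the sum is at most `δ₁↓ + δ₂↓`. Both Rayleigh quotients are nonnegative, and AM–GM turns the
bound on their sum into the bound on their product.
-/

open Matrix
open scoped ComplexOrder

open Classical in
/-- The eigenvalues of a matrix in increasing order (junk value `0` if not Hermitian). -/
noncomputable def eigUp {d : ℕ} (M : Matrix (Fin d) (Fin d) ℝ) : Fin d → ℝ :=
  if h : M.IsHermitian then h.eigenvalues ∘ Tuple.sort h.eigenvalues else 0

/-- The eigenvalues of a matrix in decreasing order. -/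
noncomputable def eigDown {d : ℕ} (M : Matrix (Fin d) (Fin d) ℝ) (j : Fin d) : ℝ :=
  eigUp M j.rev

/-- The standard symplectic form on `2n` canonical variables: block diagonal with
blocks `[[0,1],[-1,0]]`. -/
def Omega (n : ℕ) : Matrix (Fin (2*n)) (Fin (2*n)) ℝ :=
  Matrix.of fun i j =>
    if (i : ℕ) + 1 = (j : ℕ) ∧ (i : ℕ) % 2 = 0 then 1
    else if (j : ℕ) + 1 = (i : ℕ) ∧ (j : ℕ) % 2 = 0 then -1 else 0

/-- Partial transposition matrix `T = 𝟙₂^{⊕ l} ⊕ σz^{⊕ (n-l)}` for the bipartition of the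
first `l` versus the last `n - l` modes. -/
def Tmat (n l : ℕ) : Matrix (Fin (2*n)) (Fin (2*n)) ℝ :=
  Matrix.diagonal fun i => if (i : ℕ) / 2 < l ∨ (i : ℕ) % 2 = 0 then 1 else -1

/-- The partially transposed symplectic form `Ω̃ = T Ω T`. -/
def OmegaPT (n l : ℕ) : Matrix (Fin (2*n)) (Fin (2*n)) ℝ :=
  Tmat n l * Omega n * Tmat n l

open Classical in
/-- The positive square root of a positive semidefinite matrix (junk value `0` otherwise). -/
noncomputable def msqrt {d : ℕ} (M : Matrix (Fin d) (Fin d) ℝ) : Matrix (Fin d) (Fin d) ℝ :=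
  if h : M.PosSemidef then
    h.1.eigenvectorUnitary.1 * diagonal ((↑) ∘ (h.1.eigenvalues · |>.sqrt)) *
      (star h.1.eigenvectorUnitary : Matrix (Fin d) (Fin d) ℝ)
  else 0

/-- `σ + iΩ ≥ 0`: the Robertson–Schrödinger condition for a real symmetric matrix `σ`
to be a bona fide covariance matrix. -/
def IsCM (n : ℕ) (σ : Matrix (Fin (2*n)) (Fin (2*n)) ℝ) : Prop :=
  σ.IsSymm ∧
    (σ.map (Complex.ofReal ·) + Complex.I • (Omega n).map (Complex.ofReal ·)).PosSemidef

/-- `ν̃₋²`, the square of the smallest partially transposed symplectic eigenvalue of `σ`, for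
the bipartition of the first `l` versus the remaining modes: the smallest eigenvalue of
`σ^{1/2} Ω̃ᵀ σ Ω̃ σ^{1/2}`. -/
noncomputable def nuSq (n l : ℕ) (σ : Matrix (Fin (2*n)) (Fin (2*n)) ℝ) : ℝ :=
  sInf (spectrum ℝ (msqrt σ * (OmegaPT n l)ᵀ * σ * OmegaPT n l * msqrt σ))

/-- `ν̃₋`, the smallest partially transposed symplectic eigenvalue of `σ`. -/
noncomputable def nuMin (n l : ℕ) (σ : Matrix (Fin (2*n)) (Fin (2*n)) ℝ) : ℝ :=
  Real.sqrt (nuSq n l σ)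

/-- The logarithmic negativity `E_N(σ) = max (0, −log₂ ν̃₋)`. -/
noncomputable def logNeg (n l : ℕ) (σ : Matrix (Fin (2*n)) (Fin (2*n)) ℝ) : ℝ :=
  max 0 (-(Real.logb 2 (nuMin n l σ)))

open scoped RealInnerProductSpace

theorem Finset.sum_mul_le_add_of_forall_ne_le {ι : Type*} [Fintype ι] {f w : ι → ℝ} {i₁ i₂ : ι}
    (h₂₁ : f i₂ ≤ f i₁) (hf : ∀ j ≠ i₁, f j ≤ f i₂)
    (hw₀ : ∀ j, 0 ≤ w j) (hw₁ : ∀ j, w j ≤ 1) (hw : ∑ j, w j = 2) :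
    ∑ j, f j * w j ≤ f i₁ + f i₂ := by
  classical
  have hexcess : ∑ j, (f j - f i₂) * w j ≤ ∑ j, if j = i₁ then f i₁ - f i₂ else 0 := by
    refine Finset.sum_le_sum fun j _ => ?_
    split_ifs with hj
    · subst hj; nlinarith [hw₁ j]
    · nlinarith [hf j hj, hw₀ j]
  have hsplit : ∑ j, f j * w j = ∑ j, (f j - f i₂) * w j + f i₂ * ∑ j, w j := by
    rw [Finset.mul_sum, ← Finset.sum_add_distrib]
    exact Finset.sum_congr rfl fun j _ => by ring
  rw [Finset.sum_ite_eq' Finset.univ i₁, if_pos (Finset.mem_univ _)] at hexcess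
  rw [hsplit, hw]
  linarith

section InnerProductSpace

variable {ι E : Type*} [Fintype ι] [NormedAddCommGroup E] [InnerProductSpace ℝ E]

theorem OrthonormalBasis.inner_map_self_eq_sum (b : OrthonormalBasis ι ℝ E) {T : E →ₗ[ℝ] E}
    (hT : T.IsSymmetric) {μ : ι → ℝ} (hμ : ∀ j, T (b j) = μ j • b j) (x : E) :
    ⟪x, T x⟫ = ∑ j, μ j * ⟪b j, x⟫ ^ 2 := by
  rw [← b.sum_inner_mul_inner]
  refine Finset.sum_congr rfl fun j _ => ?_
  rw [← hT, hμ, real_inner_smul_left, real_inner_comm]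
  ring

theorem OrthonormalBasis.sum_inner_sq_add_inner_sq (b : OrthonormalBasis ι ℝ E) {x y : E}
    (hxy : Orthonormal ℝ ![x, y]) :
    ∑ j, (⟪b j, x⟫ ^ 2 + ⟪b j, y⟫ ^ 2) = 2 := by
  rw [Finset.sum_add_distrib, b.sum_sq_inner_right, b.sum_sq_inner_right]
  show ‖![x, y] 0‖ ^ 2 + ‖![x, y] 1‖ ^ 2 = 2
  rw [hxy.1 0, hxy.1 1]
  norm_num

theorem Orthonormal.inner_sq_add_inner_sq_le {x y : E} (hxy : Orthonormal ℝ ![x, y]) (u : E) :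
    ⟪x, u⟫ ^ 2 + ⟪y, u⟫ ^ 2 ≤ ‖u‖ ^ 2 := by
  simpa [Fin.sum_univ_two] using hxy.sum_inner_products_le u (s := Finset.univ)

theorem OrthonormalBasis.sum_mul_inner_sq_add_inner_sq_le (b : OrthonormalBasis ι ℝ E)
    {x y : E} (hxy : Orthonormal ℝ ![x, y]) {μ : ι → ℝ} {i₁ i₂ : ι}
    (h₂₁ : μ i₂ ≤ μ i₁) (hμ : ∀ j ≠ i₁, μ j ≤ μ i₂) :
    ∑ j, μ j * (⟪b j, x⟫ ^ 2 + ⟪b j, y⟫ ^ 2) ≤ μ i₁ + μ i₂ := by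
  refine Finset.sum_mul_le_add_of_forall_ne_le h₂₁ hμ (fun j => by positivity) (fun j => ?_)
    (b.sum_inner_sq_add_inner_sq hxy)
  simpa [real_inner_comm, b.orthonormal.1 j] using hxy.inner_sq_add_inner_sq_le (b j)

end InnerProductSpace

section Matrix

variable {ι : Type*} [Fintype ι]

theorem orthonormal_toLp_pair {v₁ v₂ : ι → ℝ} (h1 : v₁ ⬝ᵥ v₁ = 1) (h2 : v₂ ⬝ᵥ v₂ = 1)
    (h12 : v₁ ⬝ᵥ v₂ = 0) : Orthonormal ℝ ![WithLp.toLp 2 v₁, WithLp.toLp 2 v₂] := by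
  have hnorm : ∀ v : ι → ℝ, v ⬝ᵥ v = 1 → ‖WithLp.toLp 2 v‖ = 1 := fun v hv => by
    rw [norm_eq_sqrt_real_inner, EuclideanSpace.inner_toLp_toLp]
    simp [hv]
  simp [hnorm v₁ h1, hnorm v₂ h2, EuclideanSpace.inner_toLp_toLp, dotProduct_comm, h12]

theorem Matrix.IsHermitian.dotProduct_mulVec_self_eq_sum [DecidableEq ι] {D : Matrix ι ι ℝ}
    (hD : D.IsHermitian) (v : ι → ℝ) :
    v ⬝ᵥ D *ᵥ v = ∑ j, hD.eigenvalues j * ⟪hD.eigenvectorBasis j, WithLp.toLp 2 v⟫ ^ 2 := by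
  rw [← hD.eigenvectorBasis.inner_map_self_eq_sum (isSymmetric_toEuclideanLin_iff.mpr hD)]
  · rw [toLpLin_toLp, EuclideanSpace.inner_toLp_toLp]
    simp [dotProduct_comm]
  · intro j
    ext1
    simp [hD.mulVec_eigenvectorBasis]

end Matrix

theorem eigDown_eq {d : ℕ} {D : Matrix (Fin d) (Fin d) ℝ} (hD : D.IsHermitian) (j : Fin d) :
    eigDown D j = hD.eigenvalues (Tuple.sort hD.eigenvalues j.rev) := by
  rw [eigDown, eigUp, dif_pos hD, Function.comp_apply]

theorem Fin.le_rev_one_of_ne_rev_zero {d : ℕ} (hd : 2 ≤ d) {k : Fin d}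
    (hk : k ≠ (⟨0, Nat.zero_lt_of_lt hd⟩ : Fin d).rev) : k ≤ (⟨1, hd⟩ : Fin d).rev := by
  simp only [Ne, Fin.ext_iff, Fin.le_def, Fin.val_rev] at hk ⊢
  omega

theorem Matrix.IsHermitian.dotProduct_mulVec_add_le_eigDown {d : ℕ} (hd : 2 ≤ d)
    {D : Matrix (Fin d) (Fin d) ℝ} (hD : D.IsHermitian) {v₁ v₂ : Fin d → ℝ}
    (h1 : v₁ ⬝ᵥ v₁ = 1) (h2 : v₂ ⬝ᵥ v₂ = 1) (h12 : v₁ ⬝ᵥ v₂ = 0) :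
    v₁ ⬝ᵥ D *ᵥ v₁ + v₂ ⬝ᵥ D *ᵥ v₂ ≤ eigDown D ⟨0, Nat.zero_lt_of_lt hd⟩ + eigDown D ⟨1, hd⟩ := by
  have hsorted := Tuple.monotone_sort hD.eigenvalues
  set σ := Tuple.sort hD.eigenvalues
  rw [eigDown_eq hD, eigDown_eq hD, hD.dotProduct_mulVec_self_eq_sum,
    hD.dotProduct_mulVec_self_eq_sum, ← Finset.sum_add_distrib]
  simp_rw [← mul_add]
  refine hD.eigenvectorBasis.sum_mul_inner_sq_add_inner_sq_le (orthonormal_toLp_pair h1 h2 h12)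
    (hsorted (Fin.rev_le_rev.mpr (Fin.le_def.mpr zero_le_one))) fun j hj => ?_
  rw [← σ.apply_symm_apply j] at hj ⊢
  exact hsorted (Fin.le_rev_one_of_ne_rev_zero hd (σ.injective.ne_iff.mp hj))

/-- For a real symmetric positive semidefinite matrix `D` and orthonormal vectors `v₁, v₂`,
the product of Rayleigh quotients `⟨v₁, Dv₁⟩⟨v₂, Dv₂⟩` is at most `((δ₁↓ + δ₂↓)/2)²`,
where `δ₁↓ ≥ δ₂↓` are the two largest eigenvalues of `D`. -/
theorem rayleigh_product_upper_bound (d : ℕ) (hd : 2 ≤ d)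
    (D : Matrix (Fin d) (Fin d) ℝ) (hD : D.PosSemidef)
    (v₁ v₂ : Fin d → ℝ) (h1 : v₁ ⬝ᵥ v₁ = 1) (h2 : v₂ ⬝ᵥ v₂ = 1) (h12 : v₁ ⬝ᵥ v₂ = 0) :
    (v₁ ⬝ᵥ D *ᵥ v₁) * (v₂ ⬝ᵥ D *ᵥ v₂) ≤
      ((eigDown D ⟨0, by omega⟩ + eigDown D ⟨1, by omega⟩) / 2) ^ 2 := by
  have ha : 0 ≤ v₁ ⬝ᵥ D *ᵥ v₁ := by simpa using hD.dotProduct_mulVec_nonneg v₁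
  have hb : 0 ≤ v₂ ⬝ᵥ D *ᵥ v₂ := by simpa using hD.dotProduct_mulVec_nonneg v₂
  have hsum := hD.1.dotProduct_mulVec_add_le_eigDown hd h1 h2 h12
  calc (v₁ ⬝ᵥ D *ᵥ v₁) * (v₂ ⬝ᵥ D *ᵥ v₂)
      ≤ ((v₁ ⬝ᵥ D *ᵥ v₁ + v₂ ⬝ᵥ D *ᵥ v₂) / 2) ^ 2 := by
        nlinarith [sq_nonneg (v₁ ⬝ᵥ D *ᵥ v₁ - v₂ ⬝ᵥ D *ᵥ v₂)]
    _ ≤ _ := pow_le_pow_left₀ (by linarith) (by linarith) 2
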